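/- arXiv:2403.04630 — 2 statements merged into one kernel-verified Lean document; each statement's English description precedes it below -/
import Mathlib

section
/- Let ε > 0, c ∈ ℕ with c ≥ 1, τ ∈ ℝ, T ∈ ℕ, and q_1, ..., q_T ∈ ℝ. Let Z, Z_1, ..., Z_T be independent real random variables, where Z has the Laplace distribution with scale 2/ε and each Z_t has the Laplace distribution with scale 4c/ε. If x ≥ 0 and q_t ≥ x + τ for some t ∈ [T], then P(∃ t' ≤ t such that q_{t'} + Z_{t'} ≥ τ + Z) ≥ 1 − exp(−x·ε/(8c)). (This event is exactly the event that the sparse vector mechanism with threshold τ, privacy parameter ε, and cutoff c ≥ 1 on queries q_1, ..., q_T outputs ⊥ at or before time t.) -/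
open MeasureTheory

/-- The Laplace distribution with scale `b`: the measure on `ℝ` with density
`(1/(2b))·e^{−|z|/b}` with respect to Lebesgue measure. -/
noncomputable def laplace (b : ℝ) : Measure ℝ :=
  (volume : Measure ℝ).withDensity
    (fun z => ENNReal.ofReal ((1 / (2 * b)) * Real.exp (-|z| / b)))

instance (b : ℝ) : SigmaFinite (laplace b) := by
  unfold laplace
  infer_instance

/-!
If `Z ≤ x / 2` and `Z_t ≥ -x / 2`, then `q_t + Z_t ≥ x + τ + Z_t ≥ τ + Z`. The Laplace tails
`P(Z > a) = P(Z ≤ -a) = e^{-a/b} / 2` bound the two failure probabilities by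
`e^{-xε/4} / 2 ≤ e^{-xε/(8c)} / 2` and `e^{-xε/(8c)} / 2`, and a union bound concludes.
-/

open Set Real

section Laplace

variable {b : ℝ}

theorem laplace_Ioi (hb : 0 < b) {a : ℝ} (ha : 0 ≤ a) :
    laplace b (Ioi a) = ENNReal.ofReal (exp (-a / b) / 2) := by
  have hk : -b⁻¹ < 0 := neg_neg_of_pos (inv_pos.2 hb)
  have hdens : EqOn (fun z => ENNReal.ofReal (1 / (2 * b) * exp (-|z| / b)))
      (fun z => ENNReal.ofReal (1 / (2 * b) * exp (-b⁻¹ * z))) (Ioi a) := fun z hz => by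
    simp only [abs_of_pos (ha.trans_lt hz), neg_mul, div_eq_inv_mul, mul_neg]
  rw [laplace, withDensity_apply _ measurableSet_Ioi, setLIntegral_congr_fun measurableSet_Ioi hdens,
    ← ofReal_integral_eq_lintegral_ofReal ((integrableOn_exp_mul_Ioi hk a).const_mul _)
      (.of_forall fun _ => by positivity),
    integral_const_mul, integral_exp_mul_Ioi hk]
  congr 1
  field_simp

theorem laplace_Iic_neg (hb : 0 < b) {a : ℝ} (ha : 0 ≤ a) :
    laplace b (Iic (-a)) = ENNReal.ofReal (exp (-a / b) / 2) := by
  have hk : 0 < b⁻¹ := inv_pos.2 hb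
  have hdens : EqOn (fun z => ENNReal.ofReal (1 / (2 * b) * exp (-|z| / b)))
      (fun z => ENNReal.ofReal (1 / (2 * b) * exp (b⁻¹ * z))) (Iic (-a)) := fun z hz => by
    simp only [abs_of_nonpos (hz.out.trans (neg_nonpos.2 ha)), neg_neg, div_eq_inv_mul]
  rw [laplace, withDensity_apply _ measurableSet_Iic, setLIntegral_congr_fun measurableSet_Iic hdens,
    ← ofReal_integral_eq_lintegral_ofReal ((integrableOn_exp_mul_Iic hk _).const_mul _)
      (.of_forall fun _ => by positivity),
    integral_const_mul, integral_exp_mul_Iic hk]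
  congr 1
  field_simp

theorem isProbabilityMeasure_laplace (hb : 0 < b) : IsProbabilityMeasure (laplace b) := by
  constructor
  rw [← Iic_union_Ioi (a := 0), measure_union (Iic_disjoint_Ioi le_rfl) measurableSet_Ioi,
    ← neg_zero, laplace_Iic_neg hb le_rfl, neg_zero, laplace_Ioi hb le_rfl,
    ← ENNReal.ofReal_add (by positivity) (by positivity)]
  norm_num

end Laplace

theorem MeasureTheory.one_sub_add_le_prob_compl_union {Ω : Type*} [MeasurableSpace Ω]
    {μ : Measure Ω} [IsProbabilityMeasure μ] {s t : Set Ω} (hs : MeasurableSet s)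
    (ht : MeasurableSet t) : 1 - (μ s + μ t) ≤ μ (s ∪ t)ᶜ := by
  rw [prob_compl_eq_one_sub (hs.union ht)]
  exact tsub_le_tsub_left (measure_union_le s t) 1

theorem one_sub_tails_le_laplace_prod_pi {ι : Type*} [Fintype ι] {b₁ b₂ a₁ a₂ : ℝ}
    (hb₁ : 0 < b₁) (hb₂ : 0 < b₂) (ha₁ : 0 ≤ a₁) (ha₂ : 0 ≤ a₂) (i : ι) :
    ENNReal.ofReal (1 - (exp (-a₁ / b₁) / 2 + exp (-a₂ / b₂) / 2))
      ≤ ((laplace b₁).prod (Measure.pi fun _ : ι => laplace b₂)) {p | p.1 ≤ a₁ ∧ -a₂ < p.2 i} := by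
  have := isProbabilityMeasure_laplace hb₁
  have := isProbabilityMeasure_laplace hb₂
  have hfst := measurePreserving_fst (μ := laplace b₁) (ν := Measure.pi fun _ : ι => laplace b₂)
  have heval := (measurePreserving_eval (fun _ : ι => laplace b₂) i).comp
    (measurePreserving_snd (μ := laplace b₁) (ν := Measure.pi fun _ : ι => laplace b₂))
  have hcompl : {p : ℝ × (ι → ℝ) | p.1 ≤ a₁ ∧ -a₂ < p.2 i}
      = (Prod.fst ⁻¹' Ioi a₁ ∪ (Function.eval i ∘ Prod.snd) ⁻¹' Iic (-a₂))ᶜ := by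
    ext p
    simp
  rw [hcompl, ENNReal.ofReal_sub _ (by positivity), ENNReal.ofReal_one,
    ENNReal.ofReal_add (by positivity) (by positivity), ← laplace_Ioi hb₁ ha₁,
    ← laplace_Iic_neg hb₂ ha₂, ← hfst.measure_preimage measurableSet_Ioi.nullMeasurableSet,
    ← heval.measure_preimage measurableSet_Iic.nullMeasurableSet]
  exact one_sub_add_le_prob_compl_union (hfst.measurable measurableSet_Ioi)
    (heval.measurable measurableSet_Iic)

/-- the sparse vector mechanism outputs `⊥` when the answer is far
above the threshold.
Let `Z ~ Laplace(2/ε)` and `Z_1, …, Z_T ~ Laplace(4c/ε)` be independent (modelled by a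
product measure with first coordinate `Z` and second coordinate the vector of the
`Z_t`).  If `x ≥ 0` and `q_t ≥ x + τ` for some `t ∈ [T]`, then the probability that
`q_{t'} + Z_{t'} ≥ τ + Z` for some `t' ≤ t` is at least `1 − exp(−xε/(8c))`.
(This is exactly the event that the sparse vector mechanism with threshold `τ`, privacy
parameter `ε`, and cutoff `c ≥ 1` outputs `⊥` at or before time `t`.) -/
theorem svt_outputs_bot_when_above_threshold (ε : ℝ) (hε : 0 < ε) (c : ℕ) (hc : 1 ≤ c)
    (τ : ℝ) (T : ℕ) (q : Fin T → ℝ) (x : ℝ) (hx : 0 ≤ x)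
    (t : Fin T) (hq : x + τ ≤ q t) :
    ENNReal.ofReal (1 - Real.exp (-(x * ε) / (8 * c)))
      ≤ ((laplace (2 / ε)).prod (Measure.pi fun _ : Fin T => laplace (4 * c / ε)))
          {p : ℝ × (Fin T → ℝ) | ∃ t' : Fin T, t' ≤ t ∧ τ + p.1 ≤ q t' + p.2 t'} := by
  have hc' : (1 : ℝ) ≤ c := by exact_mod_cast hc
  have hcover : {p : ℝ × (Fin T → ℝ) | p.1 ≤ x / 2 ∧ -(x / 2) < p.2 t}
      ⊆ {p | ∃ t' : Fin T, t' ≤ t ∧ τ + p.1 ≤ q t' + p.2 t'} := fun p ⟨hZ, hZt⟩ =>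
    ⟨t, le_rfl, by linarith⟩
  have hZt_tail : exp (-(x / 2) / (4 * c / ε)) = exp (-(x * ε) / (8 * c)) := by
    congr 1
    field_simp
    ring
  have hZ_tail : exp (-(x / 2) / (2 / ε)) ≤ exp (-(x / 2) / (4 * c / ε)) := by
    rw [exp_le_exp, neg_div, neg_div, neg_le_neg_iff]
    exact div_le_div_of_nonneg_left (by positivity) (by positivity)
      (div_le_div_of_nonneg_right (by linarith) hε.le)
  calc ENNReal.ofReal (1 - exp (-(x * ε) / (8 * c)))
      ≤ ENNReal.ofReal (1 - (exp (-(x / 2) / (2 / ε)) / 2 + exp (-(x / 2) / (4 * c / ε)) / 2)) :=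
        ENNReal.ofReal_le_ofReal (by linarith)
    _ ≤ _ := one_sub_tails_le_laplace_prod_pi (by positivity) (by positivity) (by positivity)
        (by positivity) t
    _ ≤ _ := measure_mono hcover
end

section
/- (Incremental edge-sensitivity of connected component counts.) Let f_CC(S)_t denote the number of connected components of flat(S_[t]) (isolated nodes count as components). For every T ∈ ℕ and every pair of edge-neighboring insertion-only graph streams S, S' of length T, the ℓ1 distance between the increment sequences satisfies Σ_{t=1}^{T} |inc_{f_CC}(S)_t − inc_{f_CC}(S')_t| ≤ 2. -/
open Finset

/-- A finite graph: a finite vertex set together with a finite set of undirected edges. -/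
structure FinGraph where
  verts : Finset ℕ
  edges : Finset (Sym2 ℕ)

namespace FinGraph

/-- A finite graph is valid if every edge is a non-loop both of whose endpoints are vertices. -/
def Valid (G : FinGraph) : Prop :=
  ∀ e ∈ G.edges, ¬ e.IsDiag ∧ ∀ v ∈ e, v ∈ G.verts

/-- The degree of a vertex: the number of edges containing it. -/
def degree (G : FinGraph) (v : ℕ) : ℕ :=
  (G.edges.filter (fun e => v ∈ e)).card

/-- Remove a node and all of its adjacent edges. -/
def removeNode (G : FinGraph) (v : ℕ) : FinGraph :=
  ⟨G.verts.erase v, G.edges.filter (fun e => v ∉ e)⟩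

/-- Remove a single edge. -/
def removeEdge (G : FinGraph) (e : Sym2 ℕ) : FinGraph :=
  ⟨G.verts, G.edges.erase e⟩

/-- `G` is `(D, ℓ)`-bounded: it has at most `ℓ` nodes of degree greater than `D`. -/
def DLBounded (G : FinGraph) (D ℓ : ℕ) : Prop :=
  (G.verts.filter (fun v => D < G.degree v)).card ≤ ℓ

end FinGraph

/-- One graph is obtained from the other by removing one node and all of its adjacent edges. -/
def nodeNeighborGraph (G G' : FinGraph) : Prop :=
  (∃ v ∈ G.verts, G' = G.removeNode v) ∨ (∃ v ∈ G'.verts, G = G'.removeNode v)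

/-- `G'` is obtained from `G` by removing a single edge, an isolated node,
or a degree-one node together with its adjacent edge. -/
def edgeRemovalGraph (G G' : FinGraph) : Prop :=
  (∃ e ∈ G.edges, G' = G.removeEdge e) ∨
  (∃ v ∈ G.verts, G.degree v = 0 ∧ G' = FinGraph.mk (G.verts.erase v) G.edges) ∨
  (∃ v ∈ G.verts, G.degree v = 1 ∧ G' = G.removeNode v)

/-- Edge-neighboring graphs. -/
def edgeNeighborGraph (G G' : FinGraph) : Prop :=
  edgeRemovalGraph G G' ∨ edgeRemovalGraph G' G

/-- The length of a shortest chain of valid graphs from `A` to `B` in which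
consecutive graphs are related by `R`. -/
noncomputable def graphChainDist (R : FinGraph → FinGraph → Prop) (A B : FinGraph) : ℕ :=
  sInf {n | ∃ f : ℕ → FinGraph, f 0 = A ∧ f n = B ∧ (∀ i ≤ n, (f i).Valid) ∧
    ∀ i < n, R (f i) (f (i + 1))}

/-- Node distance between finite graphs. -/
noncomputable def graphNodeDist : FinGraph → FinGraph → ℕ := graphChainDist nodeNeighborGraph

/-- Edge distance between finite graphs. -/
noncomputable def graphEdgeDist : FinGraph → FinGraph → ℕ := graphChainDist edgeNeighborGraph

/-- An insertion-only graph stream: the nodes and edges arriving at each time step. -/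
structure GraphStream where
  nodes : ℕ → Finset ℕ
  edges : ℕ → Finset (Sym2 ℕ)

namespace GraphStream

/-- Validity of a graph stream of length `T`: arrivals happen only at times `1, …, T`,
no node or edge arrives twice, and every edge is a non-loop whose endpoints
arrive at or before the edge does. -/
def Valid (T : ℕ) (S : GraphStream) : Prop :=
  (∀ t, ((S.nodes t).Nonempty ∨ (S.edges t).Nonempty) → 1 ≤ t ∧ t ≤ T) ∧
  (∀ s t, s ≠ t → Disjoint (S.nodes s) (S.nodes t)) ∧
  (∀ s t, s ≠ t → Disjoint (S.edges s) (S.edges t)) ∧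
  (∀ t, ∀ e ∈ S.edges t, ¬ e.IsDiag ∧ ∀ v ∈ e, ∃ s ≤ t, v ∈ S.nodes s)

/-- The flattened graph of the stream through time `t`. -/
def flat (S : GraphStream) (t : ℕ) : FinGraph :=
  ⟨(Finset.range (t + 1)).biUnion S.nodes, (Finset.range (t + 1)).biUnion S.edges⟩

/-- Remove a node and all of its adjacent edges from a stream. -/
def removeNode (S : GraphStream) (v : ℕ) : GraphStream :=
  ⟨fun t => (S.nodes t).erase v, fun t => (S.edges t).filter (fun e => v ∉ e)⟩

/-- Remove a single edge from a stream. -/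
def removeEdge (S : GraphStream) (e : Sym2 ℕ) : GraphStream :=
  ⟨S.nodes, fun t => (S.edges t).erase e⟩

/-- Truncation of a stream: keep only arrivals at times `≤ t`. -/
def trunc (S : GraphStream) (t : ℕ) : GraphStream :=
  ⟨fun s => if s ≤ t then S.nodes s else ∅, fun s => if s ≤ t then S.edges s else ∅⟩

/-- `v` arrives at some point in the stream. -/
def hasNode (S : GraphStream) (v : ℕ) : Prop :=
  ∃ t, v ∈ S.nodes t

/-- The stream is `(D, ℓ)`-bounded through time `t`. -/
def DLBoundedThrough (S : GraphStream) (D ℓ t : ℕ) : Prop :=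
  (S.flat t).DLBounded D ℓ

end GraphStream

/-- `S'` is obtained from `S` by removing one node and all of its adjacent edges
(which may arrive at many time steps). -/
def nodeRemovalStream (S S' : GraphStream) : Prop :=
  ∃ v, S.hasNode v ∧ S' = S.removeNode v

/-- Node-neighboring streams. -/
def nodeNeighborStream (S S' : GraphStream) : Prop :=
  nodeRemovalStream S S' ∨ nodeRemovalStream S' S

/-- `S'` is obtained from the length-`T` stream `S` by removing a single edge,
an isolated node, or a degree-one node together with its adjacent edge. -/
def edgeRemovalStream (T : ℕ) (S S' : GraphStream) : Prop :=
  (∃ t, ∃ e ∈ S.edges t, S' = S.removeEdge e) ∨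
  (∃ v, S.hasNode v ∧ (S.flat T).degree v ≤ 1 ∧ S' = S.removeNode v)

/-- Edge-neighboring streams (of length `T`). -/
def edgeNeighborStream (T : ℕ) (S S' : GraphStream) : Prop :=
  edgeRemovalStream T S S' ∨ edgeRemovalStream T S' S

/-- Length of a shortest chain of valid streams of length `T` in which consecutive
streams are related by `R`. -/
noncomputable def streamChainDist (T : ℕ) (R : GraphStream → GraphStream → Prop)
    (A B : GraphStream) : ℕ :=
  sInf {n | ∃ f : ℕ → GraphStream, f 0 = A ∧ f n = B ∧ (∀ i ≤ n, (f i).Valid T) ∧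
    ∀ i < n, R (f i) (f (i + 1))}

/-- Node distance between streams of length `T`. -/
noncomputable def streamNodeDist (T : ℕ) : GraphStream → GraphStream → ℕ :=
  streamChainDist T nodeNeighborStream

/-- Edge distance between streams of length `T`. -/
noncomputable def streamEdgeDist (T : ℕ) : GraphStream → GraphStream → ℕ :=
  streamChainDist T (edgeNeighborStream T)

/-- A fixed injective key on undirected edges, providing the consistent total order in
which edges arriving at the same time step are processed. -/
def edgeKey : Sym2 ℕ → ℕ :=
  Sym2.lift ⟨fun a b => Nat.pair (min a b) (max a b), fun a b => by
    dsimp only; rw [inf_comm, sup_comm]⟩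

/-- The two endpoints of an edge, as an ordered pair. -/
def endpointsOf (e : Sym2 ℕ) : ℕ × ℕ := (edgeKey e).unpair

/-- The edges of a finite edge set, listed in increasing `edgeKey` order. -/
def sortEdges (E : Finset (Sym2 ℕ)) : List (Sym2 ℕ) :=
  ((E.image edgeKey).sort (· ≤ ·)).map fun k => s(k.unpair.1, k.unpair.2)

/-- All edges of a stream of length `T`, tagged with their arrival times, in processing
order: lexicographically by (arrival time, consistent edge order). -/
def GraphStream.procList (S : GraphStream) (T : ℕ) : List (ℕ × Sym2 ℕ) :=
  (List.range (T + 1)).flatMap fun t => (sortEdges (S.edges t)).map fun e => (t, e)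

/-- One step of the greedy projection with degree bound `D`.  The state consists of the
degree counters together with the edges kept so far (indexed by arrival time).
If `bbds = true` the counters of the endpoints are incremented for every processed edge
(the BBDS rule); if `bbds = false` they are incremented only when the edge is kept
(the DLL rule). -/
def projStep (D : ℕ) (bbds : Bool) (st : (ℕ → ℕ) × (ℕ → Finset (Sym2 ℕ)))
    (p : ℕ × Sym2 ℕ) : (ℕ → ℕ) × (ℕ → Finset (Sym2 ℕ)) :=
  let d := st.1
  let u := (endpointsOf p.2).1
  let v := (endpointsOf p.2).2
  let keep : Bool := decide (d u < D ∧ d v < D)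
  ((if bbds || keep then fun w => if w = u ∨ w = v then d w + 1 else d w else d),
   (if keep then fun s => if s = p.1 then insert p.2 (st.2 s) else st.2 s else st.2))

/-- The time-aware projection with degree bound `D` on streams of length `T`:
the BBDS projection if `bbds = true` and the DLL projection if `bbds = false`.
All arriving nodes are kept; an arriving edge is kept (at its arrival time) iff both of
its endpoints have counter value `< D` when the edge is processed. -/
def project (bbds : Bool) (D T : ℕ) (S : GraphStream) : GraphStream :=
  ⟨S.nodes,
   ((S.procList T).foldl (projStep D bbds)
      ((fun _ => 0 : ℕ → ℕ), (fun _ => ∅ : ℕ → Finset (Sym2 ℕ)))).2⟩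

/-- The BBDS projection `Π^BBDS_D` on streams of length `T`. -/
def projBBDS (D T : ℕ) : GraphStream → GraphStream := project true D T

/-- The DLL projection `Π^DLL_D` on streams of length `T`. -/
def projDLL (D T : ℕ) : GraphStream → GraphStream := project false D T

/-- The simple graph on `ℕ` determined by the edge set of a finite graph. -/
def FinGraph.toSimpleGraph (G : FinGraph) : SimpleGraph ℕ where
  Adj u v := u ≠ v ∧ s(u, v) ∈ G.edges
  symm := by
    refine ⟨?_⟩
    intro u v h
    exact ⟨h.1.symm, by rw [Sym2.eq_swap]; exact h.2⟩
  loopless := ⟨fun u h => h.1 rfl⟩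

open Classical in
/-- The number of connected components of a finite graph (isolated nodes count as
components): the number of distinct reachability classes among the vertices. -/
noncomputable def FinGraph.ccCount (G : FinGraph) : ℕ :=
  (G.verts.image fun v => G.verts.filter fun w => G.toSimpleGraph.Reachable v w).card

/-!
Write `d t` for the difference of the component counts of the two flattened graphs at time `t`.
The ℓ₁ distance of the increment sequences is the total variation of `d`, and `d` is the
difference of two monotone `{0,1}`-valued sequences, so the total variation is at most `2`.
If an edge `e = uw` is removed, these are the indicators of "`e` is present and `u`, `w` are
connected without it" and of "`e` is present"; if a node `v` with at most one edge `vu` is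
removed, they are the indicators of "`v` is present" and of "`vu` is present".
-/

theorem Finset.card_image_eq_card_image_of_eq_iff {α β γ : Type*} [DecidableEq β]
    [DecidableEq γ] {s : Finset α} {f : α → β} {g : α → γ}
    (h : ∀ x ∈ s, ∀ y ∈ s, f x = f y ↔ g x = g y) : #(s.image f) = #(s.image g) := by
  have hfst : Set.InjOn (Prod.fst : β × γ → β) ↑(s.image fun x => (f x, g x)) := by
    simp only [coe_image]
    rintro _ ⟨x, hx, rfl⟩ _ ⟨y, hy, rfl⟩ hxy
    exact Prod.ext hxy ((h x hx y hy).mp hxy)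
  have hsnd : Set.InjOn (Prod.snd : β × γ → γ) ↑(s.image fun x => (f x, g x)) := by
    simp only [coe_image]
    rintro _ ⟨x, hx, rfl⟩ _ ⟨y, hy, rfl⟩ hxy
    exact Prod.ext ((h x hx y hy).mpr hxy) hxy
  calc #(s.image f) = #((s.image fun x => (f x, g x)).image Prod.fst) := by
        rw [image_image]; rfl
    _ = #((s.image fun x => (f x, g x)).image Prod.snd) := by
        rw [card_image_of_injOn hfst, card_image_of_injOn hsnd]
    _ = #(s.image g) := by
        rw [image_image]; rfl

theorem Finset.card_image_add_one_of_injOn_erase {α β : Type*} [DecidableEq α] [DecidableEq β]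
    {s : Finset α} {f : α → β} {p q : α} (hp : p ∈ s) (hq : q ∈ s) (hpq : p ≠ q)
    (hf : f p = f q) (hinj : Set.InjOn f ↑(s.erase q)) : #(s.image f) + 1 = #s := by
  have himage : s.image f = (s.erase q).image f := by
    conv_lhs => rw [← insert_erase hq]
    rw [image_insert, insert_eq_of_mem]
    exact hf ▸ mem_image_of_mem f (mem_erase.mpr ⟨hpq, hp⟩)
  rw [himage, card_image_of_injOn hinj, card_erase_add_one hq]

theorem Finset.sum_Icc_one_sub_pred {α : Type*} [AddCommGroup α] (f : ℕ → α) (T : ℕ) :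
    ∑ t ∈ Icc 1 T, (f t - f (t - 1)) = f T - f 0 := by
  induction T with
  | zero => simp
  | succ T ih =>
    rw [sum_Icc_succ_top (by omega), ih, Nat.add_sub_cancel]
    abel

theorem sum_abs_sub_pred_le_of_eq_sub {α : Type*} [AddCommGroup α] [LinearOrder α]
    [IsOrderedAddMonoid α] {T : ℕ} {d f g : ℕ → α} (hf : Monotone f) (hg : Monotone g)
    (hd : ∀ t ≤ T, d t = f t - g t) :
    ∑ t ∈ Icc 1 T, |d t - d (t - 1)| ≤ (f T - f 0) + (g T - g 0) := by
  calc ∑ t ∈ Icc 1 T, |d t - d (t - 1)|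
      ≤ ∑ t ∈ Icc 1 T, ((f t - f (t - 1)) + (g t - g (t - 1))) := by
        refine sum_le_sum fun t ht => ?_
        have htT := (mem_Icc.mp ht).2
        rw [hd t htT, hd (t - 1) (by omega),
          show f t - g t - (f (t - 1) - g (t - 1)) = (f t - f (t - 1)) - (g t - g (t - 1)) by
            abel]
        refine (abs_sub _ _).trans (add_le_add (abs_of_nonneg ?_).le (abs_of_nonneg ?_).le)
        · exact sub_nonneg.mpr (hf (Nat.sub_le t 1))
        · exact sub_nonneg.mpr (hg (Nat.sub_le t 1))
    _ = (f T - f 0) + (g T - g 0) := by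
        rw [sum_add_distrib, sum_Icc_one_sub_pred, sum_Icc_one_sub_pred]

theorem monotone_ite_one_zero {P : ℕ → Prop} [DecidablePred P] (hP : Monotone P) :
    Monotone fun t => if P t then (1 : ℤ) else 0 := by
  intro a b hab
  dsimp only
  split_ifs with ha hb <;> first | exact le_rfl | exact zero_le_one | exact absurd (hP hab ha) hb

theorem sum_abs_sub_pred_le_two {T : ℕ} {d : ℕ → ℤ} {P Q : ℕ → Prop} [DecidablePred P]
    [DecidablePred Q] (hP : Monotone P) (hQ : Monotone Q)
    (hd : ∀ t ≤ T, d t = (if P t then 1 else 0) - (if Q t then 1 else 0)) :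
    ∑ t ∈ Icc 1 T, |d t - d (t - 1)| ≤ 2 := by
  refine (sum_abs_sub_pred_le_of_eq_sub (monotone_ite_one_zero hP)
    (monotone_ite_one_zero hQ) hd).trans ?_
  split_ifs <;> norm_num

namespace FinGraph

variable {G : FinGraph}

theorem toSimpleGraph_mono {G H : FinGraph} (h : G.edges ⊆ H.edges) :
    G.toSimpleGraph ≤ H.toSimpleGraph :=
  fun _ _ hadj => ⟨hadj.1, h hadj.2⟩

open Classical in
theorem ccCount_eq_card_image_connectedComponentMk (G : FinGraph) :
    G.ccCount = #(G.verts.image G.toSimpleGraph.connectedComponentMk) := by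
  refine card_image_eq_card_image_of_eq_iff fun x _ y hy => ?_
  rw [SimpleGraph.ConnectedComponent.eq]
  constructor
  · intro h
    have hy' : y ∈ G.verts.filter (G.toSimpleGraph.Reachable y ·) := by simp [hy]
    rw [← h] at hy'
    exact (mem_filter.mp hy').2
  · intro h
    exact filter_congr fun z _ => ⟨h.symm.trans, h.trans⟩

theorem eq_of_reachable_of_forall_notMem {v x : ℕ} (hiso : ∀ e ∈ G.edges, v ∉ e)
    (h : G.toSimpleGraph.Reachable v x) : v = x := by
  obtain ⟨p⟩ := h
  cases p with
  | nil => rfl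
  | cons hadj _ => exact absurd (Sym2.mem_mk_left _ _) (hiso _ hadj.2)

theorem ccCount_eq_ccCount_erase_add_one {v : ℕ} (hv : v ∈ G.verts)
    (hiso : ∀ e ∈ G.edges, v ∉ e) : G.ccCount = (mk (G.verts.erase v) G.edges).ccCount + 1 := by
  classical
  rw [ccCount_eq_card_image_connectedComponentMk, ccCount_eq_card_image_connectedComponentMk]
  change _ = #((G.verts.erase v).image G.toSimpleGraph.connectedComponentMk) + 1
  conv_lhs => rw [← insert_erase hv]
  rw [image_insert, card_insert_of_notMem]
  intro hmem
  obtain ⟨x, hx, hxv⟩ := mem_image.mp hmem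
  exact ne_of_mem_erase hx
    (eq_of_reachable_of_forall_notMem hiso (SimpleGraph.ConnectedComponent.eq.mp hxv).symm).symm

theorem reachable_removeEdge_or {u w x y : ℕ} (h : G.toSimpleGraph.Reachable x y) :
    (G.removeEdge s(u, w)).toSimpleGraph.Reachable x y ∨
      ((G.removeEdge s(u, w)).toSimpleGraph.Reachable x u ∨
          (G.removeEdge s(u, w)).toSimpleGraph.Reachable x w) ∧
        ((G.removeEdge s(u, w)).toSimpleGraph.Reachable u y ∨
          (G.removeEdge s(u, w)).toSimpleGraph.Reachable w y) := by
  rw [SimpleGraph.reachable_iff_reflTransGen] at h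
  induction h with
  | refl => exact Or.inl .rfl
  | @tail b c _ hbc ih =>
    by_cases hbcuw : s(b, c) = s(u, w)
    · have hx : _ ∨ _ := ih.elim (fun hxb => ?_) And.left
      · refine Or.inr ⟨hx, ?_⟩
        rcases Sym2.eq_iff.mp hbcuw with ⟨-, rfl⟩ | ⟨-, rfl⟩
        exacts [Or.inr .rfl, Or.inl .rfl]
      · rcases Sym2.eq_iff.mp hbcuw with ⟨rfl, -⟩ | ⟨rfl, -⟩
        exacts [Or.inl hxb, Or.inr hxb]
    · have hadj : (G.removeEdge s(u, w)).toSimpleGraph.Adj b c :=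
        ⟨hbc.1, mem_erase.mpr ⟨hbcuw, hbc.2⟩⟩
      exact ih.imp (·.trans hadj.reachable)
        (And.imp_right (Or.imp (·.trans hadj.reachable) (·.trans hadj.reachable)))

theorem ccCount_removeEdge_of_reachable {u w : ℕ}
    (hr : (G.removeEdge s(u, w)).toSimpleGraph.Reachable u w) :
    (G.removeEdge s(u, w)).ccCount = G.ccCount := by
  classical
  rw [ccCount_eq_card_image_connectedComponentMk, ccCount_eq_card_image_connectedComponentMk]
  refine card_image_eq_card_image_of_eq_iff fun x _ y _ => ?_
  simp only [SimpleGraph.ConnectedComponent.eq]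
  refine ⟨(·.mono (toSimpleGraph_mono (erase_subset _ _))), fun h => ?_⟩
  rcases reachable_removeEdge_or h with h | ⟨hx, hy⟩
  · exact h
  · exact (hx.elim id (·.trans hr.symm)).trans (hy.elim id hr.trans)

theorem ccCount_removeEdge_of_not_reachable {u w : ℕ} (he : s(u, w) ∈ G.edges)
    (hu : u ∈ G.verts) (hw : w ∈ G.verts)
    (hr : ¬ (G.removeEdge s(u, w)).toSimpleGraph.Reachable u w) :
    (G.removeEdge s(u, w)).ccCount = G.ccCount + 1 := by
  classical
  set H := (G.removeEdge s(u, w)).toSimpleGraph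
  set φ := SimpleGraph.ConnectedComponent.map
    (SimpleGraph.Hom.ofLE (toSimpleGraph_mono (G := G.removeEdge s(u, w)) (erase_subset _ _)))
  -- `φ` merges the components of `u` and `w` and is injective on all the others.
  have hφ : ∀ x, φ (H.connectedComponentMk x) = G.toSimpleGraph.connectedComponentMk x :=
    fun _ => rfl
  have himage : G.verts.image G.toSimpleGraph.connectedComponentMk =
      (G.verts.image H.connectedComponentMk).image φ := by
    rw [image_image]; rfl
  rw [ccCount_eq_card_image_connectedComponentMk, ccCount_eq_card_image_connectedComponentMk,
    himage]
  refine (card_image_add_one_of_injOn_erase (mem_image_of_mem _ hu) (mem_image_of_mem _ hw)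
    (mt SimpleGraph.ConnectedComponent.eq.mp hr) ?_ ?_).symm
  · rw [hφ, hφ, SimpleGraph.ConnectedComponent.eq]
    exact SimpleGraph.Adj.reachable ⟨fun h => hr (h ▸ .rfl), he⟩
  · rintro _ hc _ hd hcd
    obtain ⟨hcw, hc⟩ := mem_erase.mp hc
    obtain ⟨x, -, rfl⟩ := mem_image.mp hc
    obtain ⟨hdw, hd⟩ := mem_erase.mp hd
    obtain ⟨y, -, rfl⟩ := mem_image.mp hd
    rw [hφ, hφ, SimpleGraph.ConnectedComponent.eq] at hcd
    rw [Ne, SimpleGraph.ConnectedComponent.eq] at hcw hdw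
    rw [SimpleGraph.ConnectedComponent.eq]
    rcases reachable_removeEdge_or hcd with h | ⟨hx, hy⟩
    · exact h
    · exact (hx.resolve_right hcw).trans (hy.resolve_right fun h => hdw h.symm)

open Classical in
theorem ccCount_sub_ccCount_removeEdge (hG : G.Valid) (u w : ℕ) :
    (G.ccCount : ℤ) - (G.removeEdge s(u, w)).ccCount =
      (if s(u, w) ∈ G.edges ∧ (G.removeEdge s(u, w)).toSimpleGraph.Reachable u w then 1 else 0)
        - (if s(u, w) ∈ G.edges then 1 else 0) := by
  by_cases he : s(u, w) ∈ G.edges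
  · by_cases hr : (G.removeEdge s(u, w)).toSimpleGraph.Reachable u w
    · simp [he, hr, ccCount_removeEdge_of_reachable hr]
    · have hu := (hG _ he).2 u (Sym2.mem_mk_left u w)
      have hw := (hG _ he).2 w (Sym2.mem_mk_right u w)
      simp [he, hr, ccCount_removeEdge_of_not_reachable he hu hw hr]
  · have hG' : G.removeEdge s(u, w) = G := by
      simp [removeEdge, erase_eq_of_notMem he]
    simp [he, hG']

theorem removeNode_eq_of_forall_notMem {v : ℕ} (hiso : ∀ e ∈ G.edges, v ∉ e) :
    G.removeNode v = mk (G.verts.erase v) G.edges := by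
  simp [removeNode, filter_true_of_mem hiso]

theorem removeNode_eq_of_forall_eq {u v : ℕ} (hv : ∀ e ∈ G.edges, v ∈ e → e = s(v, u)) :
    G.removeNode v = mk ((G.removeEdge s(v, u)).verts.erase v) (G.removeEdge s(v, u)).edges := by
  simp only [removeNode, removeEdge, mk.injEq, true_and]
  ext e
  simp only [mem_filter, mem_erase]
  constructor
  · rintro ⟨he, hve⟩
    exact ⟨fun h => hve (h ▸ Sym2.mem_mk_left v u), he⟩
  · rintro ⟨hne, he⟩
    exact ⟨he, fun hve => hne (hv e he hve)⟩

theorem ccCount_sub_ccCount_removeNode (hG : G.Valid) {u v : ℕ}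
    (hv : ∀ e ∈ G.edges, v ∈ e → e = s(v, u)) :
    (G.ccCount : ℤ) - (G.removeNode v).ccCount =
      (if v ∈ G.verts then 1 else 0) - (if s(v, u) ∈ G.edges then 1 else 0) := by
  by_cases he : s(v, u) ∈ G.edges
  -- Removing the leaf `v` = removing the bridge `vu` (+1), then the isolated node `v` (-1).
  · have hvG := (hG _ he).2 v (Sym2.mem_mk_left v u)
    have huG := (hG _ he).2 u (Sym2.mem_mk_right v u)
    have hiso : ∀ e ∈ (G.removeEdge s(v, u)).edges, v ∉ e := fun e he' hve =>
      (mem_erase.mp he').1 (hv e (mem_erase.mp he').2 hve)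
    have hnr : ¬ (G.removeEdge s(v, u)).toSimpleGraph.Reachable v u := fun h =>
      (hG _ he).1 (Sym2.mk_isDiag_iff.mpr (eq_of_reachable_of_forall_notMem hiso h))
    have h₁ := ccCount_removeEdge_of_not_reachable he hvG huG hnr
    have h₂ := ccCount_eq_ccCount_erase_add_one (G := G.removeEdge s(v, u)) hvG hiso
    rw [removeNode_eq_of_forall_eq hv]
    simp only [hvG, he, if_true]
    omega
  · have hiso : ∀ e ∈ G.edges, v ∉ e := fun e he' hve => he (hv e he' hve ▸ he')
    rw [removeNode_eq_of_forall_notMem hiso]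
    by_cases hvG : v ∈ G.verts
    · simp [hvG, he, ccCount_eq_ccCount_erase_add_one hvG hiso]
    · simp [hvG, he]

theorem exists_forall_eq_of_degree_le_one {v : ℕ} (h : G.degree v ≤ 1) :
    ∃ u, ∀ e ∈ G.edges, v ∈ e → e = s(v, u) := by
  by_cases hex : ∃ e₀ ∈ G.edges, v ∈ e₀
  · obtain ⟨e₀, he₀, hve₀⟩ := hex
    obtain ⟨u, rfl⟩ := Sym2.mem_iff_exists.mp hve₀
    exact ⟨u, fun e he hve => card_le_one.mp h e (mem_filter.mpr ⟨he, hve⟩) _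
      (mem_filter.mpr ⟨he₀, hve₀⟩)⟩
  · push Not at hex
    exact ⟨v, fun e he hve => absurd hve (hex e he)⟩

end FinGraph

namespace GraphStream

variable {S : GraphStream}

theorem mem_flat_verts {t v : ℕ} : v ∈ (S.flat t).verts ↔ ∃ s ≤ t, v ∈ S.nodes s := by
  simp [flat]

theorem mem_flat_edges {t : ℕ} {e : Sym2 ℕ} : e ∈ (S.flat t).edges ↔ ∃ s ≤ t, e ∈ S.edges s := by
  simp [flat]

theorem flat_verts_mono : Monotone fun t => (S.flat t).verts :=
  fun _ _ h => biUnion_subset_biUnion_of_subset_left _ (range_subset_range.mpr (by omega))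

theorem flat_edges_mono : Monotone fun t => (S.flat t).edges :=
  fun _ _ h => biUnion_subset_biUnion_of_subset_left _ (range_subset_range.mpr (by omega))

theorem Valid.flat {T : ℕ} (hS : S.Valid T) (t : ℕ) : (S.flat t).Valid := by
  intro e he
  obtain ⟨s, hst, hes⟩ := mem_flat_edges.mp he
  refine ⟨(hS.2.2.2 s e hes).1, fun v hv => ?_⟩
  obtain ⟨r, hrs, hvr⟩ := (hS.2.2.2 s e hes).2 v hv
  exact mem_flat_verts.mpr ⟨r, hrs.trans hst, hvr⟩

theorem flat_removeEdge (e : Sym2 ℕ) (t : ℕ) :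
    (S.removeEdge e).flat t = (S.flat t).removeEdge e := by
  simp only [flat, removeEdge, FinGraph.removeEdge, FinGraph.mk.injEq, true_and]
  ext x
  simp only [mem_biUnion, mem_erase]
  tauto

theorem flat_removeNode (v : ℕ) (t : ℕ) :
    (S.removeNode v).flat t = (S.flat t).removeNode v := by
  simp only [flat, removeNode, FinGraph.removeNode, FinGraph.mk.injEq]
  constructor <;> ext x <;> simp only [mem_biUnion, mem_erase, mem_filter] <;> tauto

end GraphStream

noncomputable def ccIncrementDist (T : ℕ) (S S' : GraphStream) : ℤ :=
  ∑ t ∈ Finset.Icc 1 T,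
    |(((S.flat t).ccCount : ℤ) - ((S.flat (t - 1)).ccCount : ℤ))
      - (((S'.flat t).ccCount : ℤ) - ((S'.flat (t - 1)).ccCount : ℤ))|

theorem ccIncrementDist_comm (T : ℕ) (S S' : GraphStream) :
    ccIncrementDist T S S' = ccIncrementDist T S' S :=
  sum_congr rfl fun _ _ => abs_sub_comm _ _

theorem ccIncrementDist_le_two_of_eq {T : ℕ} {S S' : GraphStream} {P Q : ℕ → Prop}
    [DecidablePred P] [DecidablePred Q] (hP : Monotone P) (hQ : Monotone Q)
    (hd : ∀ t ≤ T, ((S.flat t).ccCount : ℤ) - (S'.flat t).ccCount =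
      (if P t then 1 else 0) - (if Q t then 1 else 0)) :
    ccIncrementDist T S S' ≤ 2 := by
  refine le_of_eq_of_le (sum_congr rfl fun t _ => ?_) (sum_abs_sub_pred_le_two hP hQ hd)
  ring_nf

theorem ccIncrementDist_removeEdge_le_two {T : ℕ} {S : GraphStream} (hS : S.Valid T)
    (u w : ℕ) : ccIncrementDist T S (S.removeEdge s(u, w)) ≤ 2 := by
  classical
  refine ccIncrementDist_le_two_of_eq (P := fun t => s(u, w) ∈ (S.flat t).edges ∧
      ((S.flat t).removeEdge s(u, w)).toSimpleGraph.Reachable u w)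
    (Q := fun t => s(u, w) ∈ (S.flat t).edges) ?_ (fun _ _ h he => GraphStream.flat_edges_mono h he)
    fun t _ => ?_
  · exact fun _ _ h => And.imp (GraphStream.flat_edges_mono h ·) fun hr => hr.mono
      (FinGraph.toSimpleGraph_mono (erase_subset_erase _ (GraphStream.flat_edges_mono h)))
  · rw [GraphStream.flat_removeEdge]
    exact FinGraph.ccCount_sub_ccCount_removeEdge (hS.flat t) u w

theorem ccIncrementDist_removeNode_le_two {T : ℕ} {S : GraphStream} (hS : S.Valid T) {v : ℕ}
    (hv : (S.flat T).degree v ≤ 1) : ccIncrementDist T S (S.removeNode v) ≤ 2 := by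
  classical
  obtain ⟨u, hu⟩ := FinGraph.exists_forall_eq_of_degree_le_one hv
  refine ccIncrementDist_le_two_of_eq (P := fun t => v ∈ (S.flat t).verts)
    (Q := fun t => s(v, u) ∈ (S.flat t).edges) (fun _ _ h hv => GraphStream.flat_verts_mono h hv)
    (fun _ _ h he => GraphStream.flat_edges_mono h he) fun t ht => ?_
  rw [GraphStream.flat_removeNode]
  exact FinGraph.ccCount_sub_ccCount_removeNode (hS.flat t)
    fun e he => hu e (GraphStream.flat_edges_mono ht he)

theorem ccIncrementDist_le_two_of_edgeRemovalStream {T : ℕ} {S S' : GraphStream}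
    (hS : S.Valid T) (h : edgeRemovalStream T S S') : ccIncrementDist T S S' ≤ 2 := by
  rcases h with ⟨-, e, -, rfl⟩ | ⟨v, -, hv, rfl⟩
  · induction e using Sym2.ind with
    | _ u w => exact ccIncrementDist_removeEdge_le_two hS u w
  · exact ccIncrementDist_removeNode_le_two hS hv

/-- incremental edge-sensitivity of connected-component counts.
For every pair of edge-neighboring insertion-only graph streams `S, S'` of length `T`,
the ℓ₁ distance between the increment sequences of the connected-component counts of
the flattened graphs is at most `2`. -/
theorem cc_incremental_edge_sensitivity (T : ℕ) (S S' : GraphStream)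
    (hS : S.Valid T) (hS' : S'.Valid T) (hnb : edgeNeighborStream T S S') :
    ∑ t ∈ Finset.Icc 1 T,
        |(((S.flat t).ccCount : ℤ) - ((S.flat (t - 1)).ccCount : ℤ))
          - (((S'.flat t).ccCount : ℤ) - ((S'.flat (t - 1)).ccCount : ℤ))| ≤ 2 := by
  change ccIncrementDist T S S' ≤ 2
  rcases hnb with h | h
  · exact ccIncrementDist_le_two_of_edgeRemovalStream hS h
  · rw [ccIncrementDist_comm]
    exact ccIncrementDist_le_two_of_edgeRemovalStream hS' h
end
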